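/- In a proper 3-coloring of an even triangulation of a polygon, the colors of the boundary vertices, read in cyclic order around the boundary, repeat cyclically in the pattern 1,2,3,1,2,3,...; consequently the number of boundary vertices is divisible by 3. -/

import Mathlib

/-!
Combinatorial triangulated surfaces.

A triangulation is encoded by its finset of faces (each a 3-element finset of
vertices).  `IsClosedSurface` says: nonempty, every face a triangle, every edge
in exactly two faces, and the faces around each vertex are connected through
edges containing that vertex (so the link of every vertex is a single cycle).
A connected closed surface with Euler characteristic 2 is a sphere, with
Euler characteristic 1 is the projective plane, and an orientable one with
Euler characteristic 0 is the torus.  Surfaces with boundary allow edges lying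
in exactly one face; a connected such surface is simply connected iff it is a
disk (Euler characteristic 1, with boundary) or a sphere (Euler characteristic 2).
The degree of a vertex is the number of edges containing it.
-/

namespace Fisk

variable {V : Type*} [DecidableEq V]

/-- The edges of a triangulation: the 2-element subsets of its faces. -/
def edges (F : Finset (Finset V)) : Finset (Finset V) :=
  F.biUnion (fun f => f.powersetCard 2)

/-- The vertex set of a triangulation. -/
def vertices (F : Finset (Finset V)) : Finset V := F.sup id

/-- The degree of a vertex: the number of edges containing it. -/
def degree (F : Finset (Finset V)) (v : V) : ℕ :=
  ((edges F).filter (fun e => v ∈ e)).card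

/-- Two vertices are adjacent if they span an edge. -/
def IsAdjacent (F : Finset (Finset V)) (a b : V) : Prop :=
  a ≠ b ∧ ({a, b} : Finset V) ∈ edges F

/-- The faces are connected under the relation "share an edge". -/
def FacesConnected (F : Finset (Finset V)) : Prop :=
  ∀ f ∈ F, ∀ g ∈ F,
    Relation.ReflTransGen (fun x y => x ∈ F ∧ y ∈ F ∧ (x ∩ y).card = 2) f g

/-- Around every vertex, the faces containing it are connected through
edges containing it (links are connected). -/
def LinkConnected (F : Finset (Finset V)) : Prop :=
  ∀ v : V, ∀ f ∈ F, ∀ g ∈ F, v ∈ f → v ∈ g →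
    Relation.ReflTransGen
      (fun x y => x ∈ F ∧ y ∈ F ∧ v ∈ x ∧ v ∈ y ∧ (x ∩ y).card = 2) f g

/-- A triangulation of a closed surface. -/
def IsClosedSurface (F : Finset (Finset V)) : Prop :=
  F.Nonempty ∧ (∀ f ∈ F, f.card = 3) ∧
  (∀ e ∈ edges F, (F.filter (fun f => e ⊆ f)).card = 2) ∧
  LinkConnected F

/-- The Euler characteristic `#V - #E + #F`. -/
def eulerChar (F : Finset (Finset V)) : ℤ :=
  ((vertices F).card : ℤ) - ((edges F).card : ℤ) + (F.card : ℤ)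

/-- A triangulation of the 2-sphere: a connected closed surface with
Euler characteristic 2. -/
def IsSphere (F : Finset (Finset V)) : Prop :=
  IsClosedSurface F ∧ FacesConnected F ∧ eulerChar F = 2

/-- The oriented edges of an ordered triple. -/
def orientedEdges (t : V × V × V) : Finset (V × V) :=
  {(t.1, t.2.1), (t.2.1, t.2.2), (t.2.2, t.1)}

/-- Orientability: each face can be given a cyclic order of its vertices so
that no directed edge is induced by two different faces (i.e. adjacent faces
induce opposite orientations on their common edge). -/
def Orientable (F : Finset (Finset V)) : Prop :=
  ∃ o : Finset V → V × V × V,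
    (∀ f ∈ F, ({(o f).1, (o f).2.1, (o f).2.2} : Finset V) = f) ∧
    (∀ f ∈ F, ∀ g ∈ F, f ≠ g → ∀ p ∈ orientedEdges (o f), p ∉ orientedEdges (o g))

/-- A triangulation of the torus: a connected orientable closed surface with
Euler characteristic 0. -/
def IsTorus (F : Finset (Finset V)) : Prop :=
  IsClosedSurface F ∧ FacesConnected F ∧ Orientable F ∧ eulerChar F = 0

/-- A triangulation of the projective plane: a connected closed surface with
Euler characteristic 1. -/
def IsProjectivePlane (F : Finset (Finset V)) : Prop :=
  IsClosedSurface F ∧ FacesConnected F ∧ eulerChar F = 1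

/-- A triangulation of a surface, possibly with boundary: every edge lies in
one or two faces. -/
def IsSurfaceWithBoundary (F : Finset (Finset V)) : Prop :=
  F.Nonempty ∧ (∀ f ∈ F, f.card = 3) ∧
  (∀ e ∈ edges F,
    (F.filter (fun f => e ⊆ f)).card = 1 ∨ (F.filter (fun f => e ⊆ f)).card = 2) ∧
  LinkConnected F

/-- The boundary edges: edges lying in exactly one face. -/
def boundaryEdges (F : Finset (Finset V)) : Finset (Finset V) :=
  (edges F).filter (fun e => (F.filter (fun f => e ⊆ f)).card = 1)

/-- The boundary vertices: vertices of boundary edges. -/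
def boundaryVertices (F : Finset (Finset V)) : Finset V :=
  (boundaryEdges F).sup id

/-- A compact connected surface (possibly with boundary) is simply connected
iff it is a sphere (χ = 2) or a disk (χ = 1, nonempty boundary). -/
def IsSimplyConnectedSurface (F : Finset (Finset V)) : Prop :=
  IsSurfaceWithBoundary F ∧ FacesConnected F ∧
    (eulerChar F = 2 ∨ (eulerChar F = 1 ∧ (boundaryEdges F).Nonempty))

/-- A triangulation of a disk (= of a polygon, the corners being the boundary
vertices): a connected surface with nonempty boundary and Euler characteristic 1. -/
def IsDisk (F : Finset (Finset V)) : Prop :=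
  IsSurfaceWithBoundary F ∧ FacesConnected F ∧ eulerChar F = 1 ∧
    (boundaryEdges F).Nonempty

/-- A proper vertex coloring: the two endpoints of every edge get distinct
colors (for a triangulation: every triangle receives all three colors). -/
def ProperColoring {C : Type*} (F : Finset (Finset V)) (c : V → C) : Prop :=
  ∀ e ∈ edges F, ∀ u ∈ e, ∀ w ∈ e, u ≠ w → c u ≠ c w

end Fisk

/-!
At a vertex `v`, every triangle `{v, x, y}` has one edge towards the colour `c v + 1` and one
towards `c v - 1`. Counting edge–face incidences, the edges of either kind at `v` meet as many
faces as there are faces at `v`; since interior edges lie in two faces and boundary edges in one,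
and the degree of `v` is even, the numbers of boundary edges of the two kinds at `v` agree
modulo 4. Connectedness of the link leaves at most two boundary edges at `v`, so a boundary
vertex has one boundary neighbour of each colour. Hence the colour step along the boundary cycle
is a constant `ε ≠ 0`, and going once around the cycle gives `n • ε = 0` in `ZMod 3`.
-/

open Finset

theorem Finset.card_filter_pair_eq_one_iff {α : Type*} [DecidableEq α] {a b : α} (hab : a ≠ b)
    (p : α → Prop) [DecidablePred p] : #(({a, b} : Finset α).filter p) = 1 ↔ (p a ↔ ¬ p b) := by
  by_cases ha : p a <;> by_cases hb : p b <;> simp [filter_insert, filter_singleton, ha, hb, hab]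

theorem ZMod.apply_eq_apply_zero_of_periodic {n : ℕ} {α : Type*} {f : ZMod n → α}
    (h : Function.Periodic f 1) (i : ZMod n) : f i = f 0 := by
  simpa using h.int_mul_eq (i.cast : ℤ)

theorem ZMod.nsmul_eq_zero_of_forall_sub_eq {n : ℕ} [NeZero n] {G : Type*} [AddCommGroup G]
    {g : ZMod n → G} {ε : G} (h : ∀ i, g (i + 1) - g i = ε) : n • ε = 0 := by
  calc n • ε = ∑ i, (g (i + 1) - g i) := by simp [h, ZMod.card]
    _ = 0 := by rw [sum_sub_distrib, sub_eq_zero]; exact Equiv.sum_comp (Equiv.addRight 1) g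

section ZModThree

variable {a x y : ZMod 3}

theorem ZMod.eq_one_or_eq_two_of_ne_zero (ha : a ≠ 0) : a = 1 ∨ a = 2 := by
  revert a; decide

theorem ZMod.eq_add_one_iff_ne_add_one (hx : x ≠ a) (hy : y ≠ a) (hxy : x ≠ y) :
    x = a + 1 ↔ y ≠ a + 1 := by
  revert a x y; decide

theorem ZMod.sub_eq_sub_of_pairwise_ne (hx : x ≠ a) (hy : y ≠ a) (hxy : x ≠ y) :
    y - a = a - x := by
  revert a x y; decide

end ZModThree

namespace Fisk

variable {V : Type*} [DecidableEq V]

def edgeFaces (F : Finset (Finset V)) (e : Finset V) : Finset (Finset V) :=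
  F.filter (fun f => e ⊆ f)

def facesAt (F : Finset (Finset V)) (v : V) : Finset (Finset V) := F.filter (fun f => v ∈ f)

def edgesAt (F : Finset (Finset V)) (v : V) : Finset (Finset V) :=
  (edges F).filter (fun e => v ∈ e)

/-- For an edge `{v, z}` this says `c z = c v + 1`; in a proper colouring the other edges at `v`
have `c z = c v - 1`. -/
abbrev RaisesColor (c : V → ZMod 3) (v : V) (e : Finset V) : Prop := c v + 1 ∈ e.image c

variable {F : Finset (Finset V)}

lemma mem_edges {e : Finset V} : e ∈ edges F ↔ ∃ f ∈ F, e ⊆ f ∧ #e = 2 := by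
  simp [edges, mem_powersetCard]

lemma card_eq_two_of_mem_edges {e : Finset V} (he : e ∈ edges F) : #e = 2 := by
  obtain ⟨-, -, -, h⟩ := mem_edges.1 he
  exact h

lemma ne_of_pair_mem_edges {x y : V} (h : {x, y} ∈ edges F) : x ≠ y := by
  rintro rfl
  simpa using card_eq_two_of_mem_edges h

lemma pair_mem_edges {f : Finset V} (hf : f ∈ F) {x y : V} (hx : x ∈ f) (hy : y ∈ f)
    (hxy : x ≠ y) : {x, y} ∈ edges F :=
  mem_edges.2 ⟨f, hf, insert_subset hx (singleton_subset_iff.2 hy), card_pair hxy⟩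

lemma exists_eq_pair_of_mem_edgesAt {v : V} {e : Finset V} (he : e ∈ edgesAt F v) :
    ∃ z, v ≠ z ∧ e = {v, z} := by
  obtain ⟨he, hv⟩ := mem_filter.1 he
  obtain ⟨x, y, hxy, rfl⟩ := card_eq_two.1 (card_eq_two_of_mem_edges he)
  rcases mem_insert.1 hv with rfl | hv
  · exact ⟨y, hxy, rfl⟩
  rw [mem_singleton.1 hv]
  exact ⟨x, hxy.symm, pair_comm _ _⟩

lemma pair_ne_pair {v x y : V} (hvx : v ≠ x) (hxy : x ≠ y) : ({v, x} : Finset V) ≠ {v, y} := by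
  intro h
  have : x ∈ ({v, y} : Finset V) := h ▸ by simp
  simp [hvx.symm, hxy] at this

lemma ProperColoring.apply_ne {C : Type*} {c : V → C} (hc : ProperColoring F c) {x y : V}
    (h : {x, y} ∈ edges F) : c x ≠ c y :=
  hc _ h x (by simp) y (by simp) (ne_of_pair_mem_edges h)

lemma mem_edges_of_mem_boundaryEdges {e : Finset V} (he : e ∈ boundaryEdges F) : e ∈ edges F :=
  (mem_filter.1 he).1

lemma one_le_card_edgeFaces {e : Finset V} (he : e ∈ edges F) : 1 ≤ #(edgeFaces F e) := by
  obtain ⟨f, hf, hef, -⟩ := mem_edges.1 he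
  exact card_pos.2 ⟨f, mem_filter.2 ⟨hf, hef⟩⟩

lemma IsSurfaceWithBoundary.card_edgeFaces_le_two (hF : IsSurfaceWithBoundary F) {e : Finset V}
    (he : e ∈ edges F) : #(edgeFaces F e) ≤ 2 :=
  (hF.2.2.1 e he).elim (fun h => h.trans_le one_le_two) le_of_eq

lemma edgeFaces_inter_eq_pair (h2 : ∀ e ∈ edges F, #(edgeFaces F e) ≤ 2) {f g : Finset V}
    (hf : f ∈ F) (hg : g ∈ F) (hfg : f ≠ g) (hcard : #(f ∩ g) = 2) :
    edgeFaces F (f ∩ g) = {f, g} := by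
  have hsub : {f, g} ⊆ edgeFaces F (f ∩ g) :=
    insert_subset (mem_filter.2 ⟨hf, inter_subset_left⟩)
      (singleton_subset_iff.2 (mem_filter.2 ⟨hg, inter_subset_right⟩))
  refine (eq_of_subset_of_card_le hsub ?_).symm
  rw [card_pair hfg]
  exact h2 _ (mem_edges.2 ⟨f, hf, inter_subset_left, hcard⟩)

lemma exists_filter_edgesAt_subset_eq (h3 : ∀ f ∈ F, #f = 3) {v : V} {f : Finset V}
    (hf : f ∈ facesAt F v) :
    ∃ x y, v ≠ x ∧ v ≠ y ∧ x ≠ y ∧ f = {v, x, y} ∧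
      (edgesAt F v).filter (· ⊆ f) = {{v, x}, {v, y}} := by
  obtain ⟨hfF, hv⟩ := mem_filter.1 hf
  have herase : #(f.erase v) = 2 := by rw [card_erase_of_mem hv, h3 f hfF]
  obtain ⟨x, y, hxy, hxy'⟩ := card_eq_two.1 herase
  have hx : x ∈ f.erase v := hxy' ▸ mem_insert_self x {y}
  have hy : y ∈ f.erase v := hxy' ▸ mem_insert_of_mem (mem_singleton_self y)
  have hvx : v ≠ x := (ne_of_mem_erase hx).symm
  have hvy : v ≠ y := (ne_of_mem_erase hy).symm
  have hfeq : f = {v, x, y} := by rw [← insert_erase hv, hxy']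
  refine ⟨x, y, hvx, hvy, hxy, hfeq, ?_⟩
  subst hfeq
  ext e
  constructor
  · intro he
    obtain ⟨he, hef⟩ := mem_filter.1 he
    obtain ⟨z, hvz, rfl⟩ := exists_eq_pair_of_mem_edgesAt he
    have hz : z ∈ ({v, x, y} : Finset V) := hef (by simp)
    simp only [mem_insert, mem_singleton] at hz ⊢
    rcases hz with rfl | rfl | rfl
    exacts [absurd rfl hvz, Or.inl rfl, Or.inr rfl]
  · intro he
    simp only [mem_insert, mem_singleton] at he
    rcases he with rfl | rfl
    · exact mem_filter.2 ⟨mem_filter.2 ⟨pair_mem_edges hfF (by simp) (by simp) hvx, by simp⟩,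
        by simp [insert_subset_iff]⟩
    · exact mem_filter.2 ⟨mem_filter.2 ⟨pair_mem_edges hfF (by simp) (by simp) hvy, by simp⟩,
        by simp [insert_subset_iff]⟩

lemma sum_card_edgeFaces_eq_mul {v : V} {S : Finset (Finset V)} (hS : ∀ e ∈ S, v ∈ e) {k : ℕ}
    (hk : ∀ f ∈ facesAt F v, #(S.filter (· ⊆ f)) = k) :
    ∑ e ∈ S, #(edgeFaces F e) = k * #(facesAt F v) := by
  calc ∑ e ∈ S, #(edgeFaces F e) = ∑ f ∈ F, #(S.filter (· ⊆ f)) := by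
        simpa only [edgeFaces, bipartiteAbove, bipartiteBelow] using
          sum_card_bipartiteAbove_eq_sum_card_bipartiteBelow (s := S) (t := F) (· ⊆ ·)
    _ = ∑ f ∈ facesAt F v, #(S.filter (· ⊆ f)) := by
        refine (sum_subset (filter_subset _ _) fun f hf hfv => ?_).symm
        refine card_eq_zero.2 (filter_eq_empty_iff.2 fun e he hef => hfv ?_)
        exact mem_filter.2 ⟨hf, hef (hS e he)⟩
    _ = k * #(facesAt F v) := by rw [sum_congr rfl hk, sum_const, smul_eq_mul, mul_comm]

lemma sum_card_edgeFaces_edgesAt (h3 : ∀ f ∈ F, #f = 3) (v : V) :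
    ∑ e ∈ edgesAt F v, #(edgeFaces F e) = 2 * #(facesAt F v) := by
  refine sum_card_edgeFaces_eq_mul (S := edgesAt F v) (fun e he => (mem_filter.1 he).2)
    fun f hf => ?_
  obtain ⟨x, y, hvx, -, hxy, -, hfilter⟩ := exists_filter_edgesAt_subset_eq h3 hf
  rw [hfilter, card_pair (pair_ne_pair hvx hxy)]

/-- Interior edges lie in two faces, boundary edges in one. -/
lemma sum_card_edgeFaces_add_card_inter_boundaryEdges
    (h2 : ∀ e ∈ edges F, #(edgeFaces F e) ≤ 2) {S : Finset (Finset V)} (hS : S ⊆ edges F) :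
    ∑ e ∈ S, #(edgeFaces F e) + #(S ∩ boundaryEdges F) = 2 * #S := by
  have hB : S ∩ boundaryEdges F = S.filter (fun e => #(edgeFaces F e) = 1) := by
    ext e
    rw [mem_inter, boundaryEdges, mem_filter, mem_filter]
    exact ⟨fun h => ⟨h.1, h.2.2⟩, fun h => ⟨h.1, hS h.1, h.2⟩⟩
  rw [hB, card_filter, ← sum_add_distrib, mul_comm, ← smul_eq_mul, ← sum_const]
  refine sum_congr rfl fun e he => ?_
  have hge := one_le_card_edgeFaces (hS he)
  have hle := h2 e (hS he)
  split_ifs <;> omega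

def linkGraph (F : Finset (Finset V)) (v : V) : SimpleGraph (facesAt F v) :=
  SimpleGraph.fromRel fun f g => #(f.1 ∩ g.1) = 2

lemma linkGraph_preconnected (hlink : LinkConnected F) (v : V) : (linkGraph F v).Preconnected := by
  rintro ⟨f, hf⟩ ⟨g, hg⟩
  obtain ⟨hfF, hvf⟩ := mem_filter.1 hf
  obtain ⟨hgF, hvg⟩ := mem_filter.1 hg
  induction hlink v f hfF g hgF hvf hvg with
  | refl => rfl
  | @tail a b _ hab ih =>
    obtain ⟨haF, -, hva, -, hcard⟩ := hab
    refine (ih (mem_filter.2 ⟨haF, hva⟩) haF hva).trans ?_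
    by_cases heq : a = b
    · subst heq
      rfl
    · exact SimpleGraph.Adj.reachable ⟨fun h => heq (congrArg Subtype.val h), Or.inl hcard⟩

lemma card_edgeSet_linkGraph_le (h2 : ∀ e ∈ edges F, #(edgeFaces F e) ≤ 2) (v : V) :
    Nat.card (linkGraph F v).edgeSet ≤ #(edgesAt F v \ boundaryEdges F) := by
  set φ : Sym2 (facesAt F v) → Finset V :=
    Sym2.lift ⟨fun f g => f.1 ∩ g.1, fun _ _ => inter_comm _ _⟩
  have key : ∀ s ∈ (linkGraph F v).edgeSet, φ s ∈ edgesAt F v \ boundaryEdges F ∧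
      ∀ h, h ∈ s ↔ h.1 ∈ edgeFaces F (φ s) := by
    intro s hs
    induction s using Sym2.ind with | h f g => ?_
    obtain ⟨hfg, hcard⟩ := hs
    have hcard : #(f.1 ∩ g.1) = 2 := hcard.elim id fun h => inter_comm f.1 g.1 ▸ h
    obtain ⟨hfF, hvf⟩ := mem_filter.1 f.2
    obtain ⟨hgF, hvg⟩ := mem_filter.1 g.2
    have hpair := edgeFaces_inter_eq_pair h2 hfF hgF (fun h => hfg (Subtype.ext h)) hcard
    simp only [φ, Sym2.lift_mk]
    refine ⟨mem_sdiff.2 ⟨mem_filter.2 ⟨mem_edges.2 ⟨f, hfF, inter_subset_left, hcard⟩,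
      mem_inter.2 ⟨hvf, hvg⟩⟩, fun hB => ?_⟩, fun h => ?_⟩
    · have h1 : #(edgeFaces F (f.1 ∩ g.1)) = 1 := (mem_filter.1 hB).2
      rw [hpair, card_pair fun h => hfg (Subtype.ext h)] at h1
      omega
    · rw [hpair, Sym2.mem_iff, mem_insert, mem_singleton, Subtype.ext_iff, Subtype.ext_iff]
  have hinj : Function.Injective fun s : (linkGraph F v).edgeSet =>
      (⟨φ s, (key s s.2).1⟩ : {e // e ∈ edgesAt F v \ boundaryEdges F}) := by
    rintro ⟨s, hs⟩ ⟨t, ht⟩ hst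
    simp only [Subtype.mk.injEq] at hst
    exact Subtype.ext (Sym2.ext fun h => by rw [(key s hs).2, (key t ht).2, hst])
  simpa only [Nat.card_eq_finsetCard] using Nat.card_le_card_of_injective _ hinj

lemma card_facesAt_le_card_sdiff_add_one (hF : IsSurfaceWithBoundary F) (v : V) :
    #(facesAt F v) ≤ #(edgesAt F v \ boundaryEdges F) + 1 := by
  rcases (facesAt F v).eq_empty_or_nonempty with h | ⟨f, hf⟩
  · simp [h]
  have : Nonempty (facesAt F v) := ⟨⟨f, hf⟩⟩
  calc #(facesAt F v) = Nat.card (facesAt F v) := (Nat.card_eq_finsetCard _).symm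
    _ ≤ Nat.card (linkGraph F v).edgeSet + 1 :=
        SimpleGraph.Connected.card_vert_le_card_edgeSet_add_one
          ⟨linkGraph_preconnected hF.2.2.2 v⟩
    _ ≤ #(edgesAt F v \ boundaryEdges F) + 1 :=
        Nat.add_le_add_right (card_edgeSet_linkGraph_le (fun _ => hF.card_edgeFaces_le_two) v) 1

theorem card_edgesAt_inter_boundaryEdges_le_two (hF : IsSurfaceWithBoundary F) (v : V) :
    #(edgesAt F v ∩ boundaryEdges F) ≤ 2 := by
  have hfaces := sum_card_edgeFaces_edgesAt hF.2.1 v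
  have hboundary := sum_card_edgeFaces_add_card_inter_boundaryEdges
    (fun _ => hF.card_edgeFaces_le_two) (S := edgesAt F v) (filter_subset _ _)
  have hlink := card_facesAt_le_card_sdiff_add_one hF v
  have hsplit := card_sdiff_add_card_inter (edgesAt F v) (boundaryEdges F)
  omega

variable {c : V → ZMod 3}

lemma raisesColor_pair_iff (c : V → ZMod 3) (v z : V) : RaisesColor c v {v, z} ↔ c z = c v + 1 := by
  simp [eq_comm]

lemma card_filter_raisesColor_subset_eq_one (h3 : ∀ f ∈ F, #f = 3) (hc : ProperColoring F c)
    {v : V} {f : Finset V} (hf : f ∈ facesAt F v) :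
    #(((edgesAt F v).filter (RaisesColor c v)).filter (· ⊆ f)) = 1 ∧
      #(((edgesAt F v).filter fun e => ¬ RaisesColor c v e).filter (· ⊆ f)) = 1 := by
  obtain ⟨x, y, hvx, hvy, hxy, rfl, hfilter⟩ := exists_filter_edgesAt_subset_eq h3 hf
  have hfF := (mem_filter.1 hf).1
  have hcx := hc.apply_ne (pair_mem_edges hfF (by simp) (by simp) hvx)
  have hcy := hc.apply_ne (pair_mem_edges hfF (by simp) (by simp) hvy)
  have hcxy := hc.apply_ne (pair_mem_edges hfF (by simp) (by simp) hxy)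
  have hiff := ZMod.eq_add_one_iff_ne_add_one hcx.symm hcy.symm hcxy
  have hne := pair_ne_pair hvx hxy
  rw [filter_comm, hfilter, filter_comm, hfilter, card_filter_pair_eq_one_iff hne,
    card_filter_pair_eq_one_iff hne, raisesColor_pair_iff, raisesColor_pair_iff]
  tauto

theorem card_filter_raisesColor_eq (hF : IsSurfaceWithBoundary F) (hc : ProperColoring F c)
    {v : V} (hv : Even (degree F v)) :
    #((edgesAt F v ∩ boundaryEdges F).filter (RaisesColor c v)) =
      #((edgesAt F v ∩ boundaryEdges F).filter fun e => ¬ RaisesColor c v e) := by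
  have h2 : ∀ e ∈ edges F, #(edgeFaces F e) ≤ 2 := fun _ => hF.card_edgeFaces_le_two
  have hvmem : ∀ (p : Finset V → Prop) [DecidablePred p], ∀ e ∈ (edgesAt F v).filter p, v ∈ e :=
    fun _ _ e he => (mem_filter.1 (mem_filter.1 he).1).2
  have hsub : ∀ (p : Finset V → Prop) [DecidablePred p], (edgesAt F v).filter p ⊆ edges F :=
    fun _ _ => (filter_subset _ _).trans (filter_subset _ _)
  have hup := sum_card_edgeFaces_eq_mul (hvmem _) (k := 1)
    fun f hf => (card_filter_raisesColor_subset_eq_one hF.2.1 hc hf).1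
  have hdown := sum_card_edgeFaces_eq_mul (hvmem _) (k := 1)
    fun f hf => (card_filter_raisesColor_subset_eq_one hF.2.1 hc hf).2
  have hup' := sum_card_edgeFaces_add_card_inter_boundaryEdges h2 (hsub (RaisesColor c v))
  have hdown' := sum_card_edgeFaces_add_card_inter_boundaryEdges h2
    (hsub fun e => ¬ RaisesColor c v e)
  rw [filter_inter] at hup' hdown'
  have hsplit := card_filter_add_card_filter_not (s := edgesAt F v) (RaisesColor c v)
  have hBsplit := card_filter_add_card_filter_not (s := edgesAt F v ∩ boundaryEdges F)
    (RaisesColor c v)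
  have hle := card_edgesAt_inter_boundaryEdges_le_two hF v
  obtain ⟨k, hk⟩ := hv
  change #(edgesAt F v) = k + k at hk
  -- the two boundary counts differ by `2 (#up - #down)`, a multiple of 4, and add up to at most 2
  omega

theorem even_card_edgesAt_inter_boundaryEdges (hF : IsSurfaceWithBoundary F)
    (hc : ProperColoring F c) {v : V} (hv : Even (degree F v)) :
    Even #(edgesAt F v ∩ boundaryEdges F) := by
  rw [← card_filter_add_card_filter_not (RaisesColor c v), card_filter_raisesColor_eq hF hc hv]
  exact ⟨_, rfl⟩

lemma pair_mem_edgesAt_inter_boundaryEdges {v x : V} (h : {v, x} ∈ boundaryEdges F) :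
    {v, x} ∈ edgesAt F v ∩ boundaryEdges F :=
  mem_inter.2 ⟨mem_filter.2 ⟨mem_edges_of_mem_boundaryEdges h, mem_insert_self _ _⟩, h⟩

theorem apply_ne_of_pair_mem_boundaryEdges (hF : IsSurfaceWithBoundary F)
    (hc : ProperColoring F c) {v x y : V} (hv : Even (degree F v))
    (hx : {v, x} ∈ boundaryEdges F) (hy : {v, y} ∈ boundaryEdges F) (hxy : x ≠ y) :
    c x ≠ c y := by
  have hne := pair_ne_pair (ne_of_pair_mem_edges (mem_edges_of_mem_boundaryEdges hx)) hxy
  have hEB : edgesAt F v ∩ boundaryEdges F = {{v, x}, {v, y}} := by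
    refine (eq_of_subset_of_card_le ?_ ?_).symm
    · exact insert_subset (pair_mem_edgesAt_inter_boundaryEdges hx)
        (singleton_subset_iff.2 (pair_mem_edgesAt_inter_boundaryEdges hy))
    · rw [card_pair hne]
      exact card_edgesAt_inter_boundaryEdges_le_two hF v
  have hbalance := card_filter_raisesColor_eq hF hc hv
  have hsplit := card_filter_add_card_filter_not (s := edgesAt F v ∩ boundaryEdges F)
    (RaisesColor c v)
  rw [hEB] at hsplit hbalance
  rw [card_pair hne] at hsplit
  have hone : #(({{v, x}, {v, y}} : Finset (Finset V)).filter (RaisesColor c v)) = 1 := by omega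
  rw [card_filter_pair_eq_one_iff hne, raisesColor_pair_iff, raisesColor_pair_iff] at hone
  intro h
  rw [h] at hone
  exact iff_not_self hone

lemma mem_vertices_of_mem_boundaryEdges {e : Finset V} (he : e ∈ boundaryEdges F) {v : V}
    (hv : v ∈ e) : v ∈ vertices F := by
  obtain ⟨f, hf, hef, -⟩ := mem_edges.1 (mem_filter.1 he).1
  exact mem_sup.2 ⟨f, hf, hef hv⟩

/-- For `n = 2` the vertex `b 0` would have a single boundary edge. -/
theorem three_le_of_boundary_cycle (hF : IsSurfaceWithBoundary F) (hc : ProperColoring F c)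
    (heven : ∀ v ∈ vertices F, Even (degree F v)) {n : ℕ} [NeZero n] {b : ZMod n → V}
    (hrange : ∀ v ∈ boundaryVertices F, ∃ i, b i = v)
    (hcyc : ∀ i, {b i, b (i + 1)} ∈ boundaryEdges F) : 3 ≤ n := by
  have hb : b 0 ≠ b 1 := by
    simpa using ne_of_pair_mem_edges (mem_edges_of_mem_boundaryEdges (hcyc 0))
  by_contra! hn
  obtain rfl : n = 2 := by
    have := NeZero.pos n
    interval_cases n
    · exact absurd (congrArg b (Subsingleton.elim 0 1)) hb
    · rfl
  have hsub : edgesAt F (b 0) ∩ boundaryEdges F ⊆ {{b 0, b 1}} := by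
    intro e he
    obtain ⟨heE, hB⟩ := mem_inter.1 he
    obtain ⟨z, hz, rfl⟩ := exists_eq_pair_of_mem_edgesAt heE
    obtain ⟨j, rfl⟩ := hrange z (mem_sup.2 ⟨_, hB, mem_insert_of_mem (mem_singleton_self z)⟩)
    fin_cases j
    · exact absurd rfl hz
    · exact mem_singleton_self _
  have hb01 : {b 0, b 1} ∈ boundaryEdges F := by simpa using hcyc 0
  have hone : #(edgesAt F (b 0) ∩ boundaryEdges F) = 1 :=
    le_antisymm ((card_le_card hsub).trans (card_singleton _).le)
      (card_pos.2 ⟨_, pair_mem_edgesAt_inter_boundaryEdges hb01⟩)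
  have heven0 := even_card_edgesAt_inter_boundaryEdges hF hc
    (heven (b 0) (mem_vertices_of_mem_boundaryEdges hb01 (mem_insert_self _ _)))
  rw [hone] at heven0
  exact Nat.not_even_one heven0

theorem periodic_sub_of_boundary_cycle (hF : IsSurfaceWithBoundary F) (hc : ProperColoring F c)
    (heven : ∀ v ∈ vertices F, Even (degree F v)) {n : ℕ} (hn : 3 ≤ n) {b : ZMod n → V}
    (hinj : Function.Injective b) (hcyc : ∀ i, {b i, b (i + 1)} ∈ boundaryEdges F) :
    Function.Periodic (fun i => c (b (i + 1)) - c (b i)) 1 := by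
  intro i
  have hi : i ≠ i + 1 + 1 := by
    intro h
    rw [add_assoc, left_eq_add, one_add_one_eq_two] at h
    have := Nat.le_of_dvd two_pos ((ZMod.natCast_eq_zero_iff 2 n).1 (by exact_mod_cast h))
    omega
  have hprev : {b (i + 1), b i} ∈ boundaryEdges F := pair_comm (b i) _ ▸ hcyc i
  have hnext := hcyc (i + 1)
  have hv := heven _ (mem_vertices_of_mem_boundaryEdges hnext (mem_insert_self _ _))
  exact ZMod.sub_eq_sub_of_pairwise_ne (hc.apply_ne (mem_edges_of_mem_boundaryEdges (hcyc i)))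
    (hc.apply_ne (mem_edges_of_mem_boundaryEdges hnext)).symm
    (apply_ne_of_pair_mem_boundaryEdges hF hc hv hprev hnext (hinj.ne hi))

end Fisk

open Fisk in
/-- In a proper 3-coloring of an even triangulation of a polygon, the colors
of the boundary vertices, read in cyclic order around the boundary, repeat
cyclically in the pattern `1,2,3,1,2,3,…` (i.e. each cyclic step adds a fixed
nonzero constant in `ZMod 3`); consequently the number `n` of boundary
vertices is divisible by 3. -/
theorem boundary_colors_cyclic {V : Type*} [DecidableEq V]
    (F : Finset (Finset V)) (hF : IsDisk F)
    (heven : ∀ v ∈ vertices F, Even (degree F v))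
    (c : V → ZMod 3) (hc : ProperColoring F c)
    (n : ℕ) (hn : 0 < n) (b : ZMod n → V)
    (hinj : Function.Injective b)
    (hrange : ∀ v : V, v ∈ boundaryVertices F ↔ ∃ i, b i = v)
    (hcyc : ∀ i : ZMod n, ({b i, b (i + 1)} : Finset V) ∈ boundaryEdges F) :
    (∃ ε : ZMod 3, (ε = 1 ∨ ε = 2) ∧ ∀ i : ZMod n, c (b (i + 1)) = c (b i) + ε)
      ∧ 3 ∣ n := by
  obtain ⟨hsurf, -, -, -⟩ := hF
  have : NeZero n := ⟨hn.ne'⟩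
  have hn3 := three_le_of_boundary_cycle hsurf hc heven (fun v hv => (hrange v).1 hv) hcyc
  have hstep (i : ZMod n) : c (b (i + 1)) - c (b i) = c (b 1) - c (b 0) := by
    simpa using ZMod.apply_eq_apply_zero_of_periodic
      (periodic_sub_of_boundary_cycle hsurf hc heven hn3 hinj hcyc) i
  have hε : c (b 1) - c (b 0) ≠ 0 :=
    sub_ne_zero.2 (hc.apply_ne (mem_edges_of_mem_boundaryEdges (by simpa using hcyc 0))).symm
  refine ⟨⟨_, ZMod.eq_one_or_eq_two_of_ne_zero hε, fun i => sub_eq_iff_eq_add'.1 (hstep i)⟩, ?_⟩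
  have hnε := ZMod.nsmul_eq_zero_of_forall_sub_eq hstep
  rwa [nsmul_eq_mul, mul_eq_zero, or_iff_left hε, ZMod.natCast_eq_zero_iff] at hnε
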